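/- For every n ≥ 0 and 1 ≤ i ≤ n+1, the elementary quasi-codegeneracy satisfies u_i^{(n)} = z_{i−1}^{(n)} ∘ s_{i−1}^{(n)} ∘ (z_{i−1}^{(n+1)})^{−1} as maps [n+1] → [n], where z_{i−1}^{(n+1)} is the cyclic permutation of [n+1] and z_{i−1}^{(n)} the cyclic permutation of [n]. In particular u_1 = s_0. -/

import Mathlib

/-- The elementary coface `d_i^{(n+1)} : [n] → [n+1]` (monotonic injection omitting `i`):
`k ↦ k` for `k < i` and `k ↦ k+1` for `k ≥ i`. -/
def dMap (n i : ℕ) : Fin (n + 1) → Fin (n + 2) :=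
  fun k => if (k : ℕ) < i then ⟨k, by omega⟩ else ⟨(k : ℕ) + 1, by omega⟩

/-- The elementary quasi-codegeneracy `u_i^{(n)} : [n+1] → [n]`:
`u_i 0 = u_i i = 0`, `u_i k = k` for `1 ≤ k ≤ i-1`, and `u_i k = k-1` for `k > i`. -/
def uMap (n i : ℕ) : Fin (n + 2) → Fin (n + 1) :=
  fun k => if (k : ℕ) = 0 ∨ (k : ℕ) = i then 0
    else if h : (k : ℕ) < i ∧ (k : ℕ) < n + 1 then ⟨k, h.2⟩
    else ⟨(k : ℕ) - 1, by omega⟩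

/-- The adjacent transposition `t_i : [n] → [n]` exchanging `i` and `i+1`. -/
def tMap (n i : ℕ) : Fin (n + 1) → Fin (n + 1) :=
  fun k => if h : (k : ℕ) = i ∧ i + 1 < n + 1 then ⟨i + 1, h.2⟩
    else if h2 : (k : ℕ) = i + 1 then ⟨i, by omega⟩
    else k

/-- The standard cyclic permutation `z_i : [n] → [n]`:
`k ↦ k+1` for `k ≤ i-1`, `i ↦ 0`, and `k ↦ k` for `k > i`. -/
def zMap (n i : ℕ) : Fin (n + 1) → Fin (n + 1) :=
  fun k => if (k : ℕ) = i then 0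
    else if h : (k : ℕ) < i ∧ (k : ℕ) + 1 < n + 1 then ⟨(k : ℕ) + 1, h.2⟩
    else k

/-- The elementary codegeneracy `s_i^{(n)} : [n+1] → [n]`:
`k ↦ k` for `k ≤ i` and `k ↦ k-1` for `k > i`. -/
def sMap (n i : ℕ) : Fin (n + 2) → Fin (n + 1) :=
  fun k => if h : (k : ℕ) ≤ i ∧ (k : ℕ) < n + 1 then ⟨k, h.2⟩
    else ⟨(k : ℕ) - 1, by omega⟩

/-! The cycle `z_{i-1}` of `[n+1]` moves `i - 1` to `0` and shifts `0, …, i - 2` up by one, so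
precomposing it turns the codegeneracy pattern of `u_i` (collapse `0` and `i`) into that of
`s_{i-1}` followed by the cycle `z_{i-1}` of `[n]`: `u_i ∘ z_{i-1} = z_{i-1} ∘ s_{i-1}`.
Composing on the right with `z_{i-1}⁻¹` gives the claim, and `z_0 = id` gives `u_1 = s_0`. -/

theorem coe_zMap (m j : ℕ) (hj : j ≤ m) (k : Fin (m + 1)) :
    (zMap m j k : ℕ) = if (k : ℕ) = j then 0 else if (k : ℕ) < j then (k : ℕ) + 1 else k := by
  unfold zMap
  split_ifs <;> grind

theorem coe_sMap (n j : ℕ) (k : Fin (n + 2)) :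
    (sMap n j k : ℕ) = if (k : ℕ) ≤ j ∧ (k : ℕ) < n + 1 then (k : ℕ) else (k : ℕ) - 1 := by
  unfold sMap
  split_ifs <;> rfl

theorem coe_uMap (n j : ℕ) (k : Fin (n + 2)) :
    (uMap n j k : ℕ) =
      if (k : ℕ) = 0 ∨ (k : ℕ) = j then 0
      else if (k : ℕ) < j ∧ (k : ℕ) < n + 1 then (k : ℕ) else (k : ℕ) - 1 := by
  unfold uMap
  split_ifs <;> rfl

theorem zMap_zero (m : ℕ) : zMap m 0 = id := by
  ext k
  rw [coe_zMap m 0 m.zero_le]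
  split_ifs <;> simp_all

theorem uMap_comp_zMap {n i : ℕ} (hi : i ≤ n + 1) :
    uMap n i ∘ zMap (n + 1) (i - 1) = zMap n (i - 1) ∘ sMap n (i - 1) := by
  ext k
  simp only [Function.comp_apply, coe_uMap, coe_zMap (n + 1) (i - 1) (by omega),
    coe_zMap n (i - 1) (by omega), coe_sMap]
  grind

theorem u_eq_conj_s (n i : ℕ) (hi2 : i ≤ n + 1)
    (zinv : Fin (n + 2) → Fin (n + 2))
    (hzr : zMap (n + 1) (i - 1) ∘ zinv = id) :
    uMap n i = zMap n (i - 1) ∘ sMap n (i - 1) ∘ zinv ∧ uMap n 1 = sMap n 0 := by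
  constructor
  · rw [← Function.comp_assoc, ← uMap_comp_zMap hi2, Function.comp_assoc, hzr, Function.comp_id]
  · simpa [zMap_zero] using uMap_comp_zMap (n := n) (i := 1) (by omega)
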